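/- In the 3×3 SMC instance with U(m1,w1)=V(m1,w1)=1; U(m1,w3)=0,V(m1,w3)=α; U(m2,w1)=0,V(m2,w1)=α; U(m2,w2)=V(m2,w2)=1; U(m2,w3)=α,V(m2,w3)=0; U(m3,w1)=α,V(m3,w1)=0; U(m3,w3)=V(m3,w3)=1; all other pairs zero, with α ≥ 3: the fractional matching μ = (1/(α(α−1)))·μ2 + (1/α)·μ3 + ((α−2)/(α−1))·μ5, where μ2={(m1,w2),(m2,w3),(m3,w1)}, μ3={(m1,w3),(m2,w1),(m3,w2)}, μ5={(m1,w3),(m2,w2),(m3,w1)}, is a stable fractional matching, the unique stable integral (perfect) matching is μ1={(m1,w1),(m2,w2),(m3,w3)}, and μ assigns weight 0 to the pair (m1,w1), so μ1 cannot appear in any support of μ; hence every integral matching in any support of μ is unstable. -/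
import Mathlib


open Finset

/-- A fractional matching: nonnegative weights with row and column sums at most 1. -/
def IsFrac {n : ℕ} (μ : Fin n → Fin n → ℝ) : Prop :=
  (∀ m w, 0 ≤ μ m w) ∧ (∀ m, ∑ w, μ m w ≤ 1) ∧ (∀ w, ∑ m, μ m w ≤ 1)

/-- An integral matching takes values in {0,1}. -/
def IsIntegralM {n : ℕ} (μ : Fin n → Fin n → ℝ) : Prop :=
  ∀ m w, μ m w = 0 ∨ μ m w = 1

/-- A complete (perfect) matching: all row and column sums equal 1. -/
def IsPerfect {n : ℕ} (μ : Fin n → Fin n → ℝ) : Prop :=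
  (∀ m, ∑ w, μ m w = 1) ∧ (∀ w, ∑ m, μ m w = 1)

/-- Utility of man `m` under matching `μ`. -/
def uM {n : ℕ} (U μ : Fin n → Fin n → ℝ) (m : Fin n) : ℝ := ∑ w, U m w * μ m w

/-- Utility of woman `w` under matching `μ`. -/
def vW {n : ℕ} (V μ : Fin n → Fin n → ℝ) (w : Fin n) : ℝ := ∑ m, V m w * μ m w

/-- Stability: no blocking pair. -/
def IsStable {n : ℕ} (U V μ : Fin n → Fin n → ℝ) : Prop :=
  ∀ m w, U m w ≤ uM U μ m ∨ V m w ≤ vW V μ w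

/-- Social welfare. -/
def welfare {n : ℕ} (U V μ : Fin n → Fin n → ℝ) : ℝ :=
  (∑ m, uM U μ m) + (∑ w, vW V μ w)

def U4 (α : ℝ) : Fin 3 → Fin 3 → ℝ := ![![1,0,0],![0,1,α],![α,0,1]]
def V4 (α : ℝ) : Fin 3 → Fin 3 → ℝ := ![![1,0,α],![α,1,0],![0,0,1]]
/-- μ2 = {(m1,w2),(m2,w3),(m3,w1)} -/
def mu42 : Fin 3 → Fin 3 → ℝ := ![![0,1,0],![0,0,1],![1,0,0]]
/-- μ3 = {(m1,w3),(m2,w1),(m3,w2)} -/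
def mu43 : Fin 3 → Fin 3 → ℝ := ![![0,0,1],![1,0,0],![0,1,0]]
/-- μ5 = {(m1,w3),(m2,w2),(m3,w1)} -/
def mu45 : Fin 3 → Fin 3 → ℝ := ![![0,0,1],![0,1,0],![1,0,0]]
/-- μ1 = {(m1,w1),(m2,w2),(m3,w3)} -/
def mu41 : Fin 3 → Fin 3 → ℝ := ![![1,0,0],![0,1,0],![0,0,1]]

noncomputable def mu4 (α : ℝ) : Fin 3 → Fin 3 → ℝ := fun m w =>
  (1/(α*(α-1))) * mu42 m w + (1/α) * mu43 m w + ((α-2)/(α-1)) * mu45 m w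

lemma mu4_rowsum (α : ℝ) (hα : 3 ≤ α) (m : Fin 3) : ∑ w, mu4 α m w = 1 := by
  have h1 : α ≠ 0 := by linarith
  have h2 : α - 1 ≠ 0 := by intro h; linarith
  fin_cases m <;>
    simp [mu4, mu42, mu43, mu45, Fin.sum_univ_three, Matrix.vecHead, Matrix.vecTail] <;>
    field_simp <;> ring

lemma mu4_colsum (α : ℝ) (hα : 3 ≤ α) (w : Fin 3) : ∑ m, mu4 α m w = 1 := by
  have h1 : α ≠ 0 := by linarith
  have h2 : α - 1 ≠ 0 := by intro h; linarith
  fin_cases w <;>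
    simp [mu4, mu42, mu43, mu45, Fin.sum_univ_three, Matrix.vecHead, Matrix.vecTail] <;>
    field_simp <;> ring

set_option maxHeartbeats 2000000 in
lemma unique_aux (α : ℝ) (hα : 3 ≤ α) (ν : Fin 3 → Fin 3 → ℝ) (hI : IsIntegralM ν)
    (hP : IsPerfect ν) (hS : IsStable (U4 α) (V4 α) ν) : ν = mu41 := by
  have hr0 := hP.1 0; have hr1 := hP.1 1; have hr2 := hP.1 2
  have hc0 := hP.2 0; have hc1 := hP.2 1; have hc2 := hP.2 2
  rw [Fin.sum_univ_three] at hr0 hr1 hr2 hc0 hc1 hc2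
  rcases hI 0 0 with h00|h00 <;> rcases hI 0 1 with h01|h01 <;> rcases hI 0 2 with h02|h02 <;>
  rcases hI 1 0 with h10|h10 <;> rcases hI 1 1 with h11|h11 <;> rcases hI 1 2 with h12|h12 <;>
  rcases hI 2 0 with h20|h20 <;> rcases hI 2 1 with h21|h21 <;> rcases hI 2 2 with h22|h22 <;>
  rw [h00,h01,h02] at hr0 <;> rw [h10,h11,h12] at hr1 <;> rw [h20,h21,h22] at hr2 <;>
  rw [h00,h10,h20] at hc0 <;> rw [h01,h11,h21] at hc1 <;> rw [h02,h12,h22] at hc2 <;>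
  first
  | (norm_num at hr0 hr1 hr2 hc0 hc1 hc2; done)
  | (funext m w; fin_cases m <;> fin_cases w <;>
      simp [mu41, h00,h01,h02,h10,h11,h12,h20,h21,h22, Matrix.vecHead, Matrix.vecTail];
      done)
  | (exfalso; rcases hS 0 0 with h|h <;>
      simp [uM, vW, U4, V4, Fin.sum_univ_three, Matrix.vecHead, Matrix.vecTail,
        h00,h01,h02,h10,h11,h12,h20,h21,h22] at h <;> linarith)
  | (exfalso; rcases hS 1 1 with h|h <;>
      simp [uM, vW, U4, V4, Fin.sum_univ_three, Matrix.vecHead, Matrix.vecTail,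
        h00,h01,h02,h10,h11,h12,h20,h21,h22] at h <;> linarith)
  | (exfalso; rcases hS 2 2 with h|h <;>
      simp [uM, vW, U4, V4, Fin.sum_univ_three, Matrix.vecHead, Matrix.vecTail,
        h00,h01,h02,h10,h11,h12,h20,h21,h22] at h <;> linarith)

lemma mu4_frac (α : ℝ) (hα : 3 ≤ α) : IsFrac (mu4 α) := by
  have hα0 : (0:ℝ) < α := by linarith
  have h1 : (0:ℝ) < α - 1 := by linarith
  have h2 : (0:ℝ) ≤ α - 2 := by linarith
  refine ⟨?_, fun m => le_of_eq (mu4_rowsum α hα m), fun w => le_of_eq (mu4_colsum α hα w)⟩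
  intro m w
  fin_cases m <;> fin_cases w <;>
    simp [mu4, mu42, mu43, mu45, Matrix.vecHead, Matrix.vecTail] <;>
    positivity

lemma mu4_uM0 (α : ℝ) (hα : 3 ≤ α) : uM (U4 α) (mu4 α) 0 = 0 := by
  simp [uM, U4, mu4, mu42, mu43, mu45, Fin.sum_univ_three, Matrix.vecHead, Matrix.vecTail]

lemma mu4_uM1 (α : ℝ) (hα : 3 ≤ α) : uM (U4 α) (mu4 α) 1 = 1 := by
  have h1 : α ≠ 0 := by linarith
  have h2 : α - 1 ≠ 0 := by intro h; linarith
  simp [uM, U4, mu4, mu42, mu43, mu45, Fin.sum_univ_three, Matrix.vecHead, Matrix.vecTail]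
  field_simp
  ring

lemma mu4_uM2 (α : ℝ) (hα : 3 ≤ α) : uM (U4 α) (mu4 α) 2 = α - 1 := by
  have h1 : α ≠ 0 := by linarith
  have h2 : α - 1 ≠ 0 := by intro h; linarith
  simp [uM, U4, mu4, mu42, mu43, mu45, Fin.sum_univ_three, Matrix.vecHead, Matrix.vecTail]
  field_simp
  ring

lemma mu4_vW0 (α : ℝ) (hα : 3 ≤ α) : vW (V4 α) (mu4 α) 0 = 1 := by
  have h1 : α ≠ 0 := by linarith
  have h2 : α - 1 ≠ 0 := by intro h; linarith
  simp [vW, V4, mu4, mu42, mu43, mu45, Fin.sum_univ_three, Matrix.vecHead, Matrix.vecTail]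
  field_simp

lemma mu4_vW1 (α : ℝ) (hα : 3 ≤ α) : vW (V4 α) (mu4 α) 1 = (α-2)/(α-1) := by
  simp [vW, V4, mu4, mu42, mu43, mu45, Fin.sum_univ_three, Matrix.vecHead, Matrix.vecTail]

lemma mu4_vW2 (α : ℝ) (hα : 3 ≤ α) : vW (V4 α) (mu4 α) 2 = (α*α - α - 1)/(α-1) := by
  have h1 : α ≠ 0 := by linarith
  have h2 : α - 1 ≠ 0 := by intro h; linarith
  simp [vW, V4, mu4, mu42, mu43, mu45, Fin.sum_univ_three, Matrix.vecHead, Matrix.vecTail]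
  field_simp
  ring

lemma mu4_stable (α : ℝ) (hα : 3 ≤ α) : IsStable (U4 α) (V4 α) (mu4 α) := by
  intro m w
  fin_cases m <;> fin_cases w
  · exact Or.inr (mu4_vW0 α hα).ge
  · exact Or.inl (mu4_uM0 α hα).ge
  · exact Or.inl (mu4_uM0 α hα).ge
  · exact Or.inl (show (0:ℝ) ≤ uM (U4 α) (mu4 α) 1 by rw [mu4_uM1 α hα]; norm_num)
  · exact Or.inl (mu4_uM1 α hα).ge
  · exact Or.inr (show (0:ℝ) ≤ vW (V4 α) (mu4 α) 2 by
      rw [mu4_vW2 α hα]; apply div_nonneg <;> nlinarith)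
  · exact Or.inr (show (0:ℝ) ≤ vW (V4 α) (mu4 α) 0 by rw [mu4_vW0 α hα]; norm_num)
  · exact Or.inl (show (0:ℝ) ≤ uM (U4 α) (mu4 α) 2 by rw [mu4_uM2 α hα]; linarith)
  · exact Or.inl (show (1:ℝ) ≤ uM (U4 α) (mu4 α) 2 by rw [mu4_uM2 α hα]; linarith)

lemma mu41_stable (α : ℝ) (hα : 3 ≤ α) : IsStable (U4 α) (V4 α) mu41 := by
  intro m w
  fin_cases m <;> fin_cases w <;>
    simp [U4, V4, mu41, uM, vW, Fin.sum_univ_three, Matrix.vecHead, Matrix.vecTail] <;>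
    linarith

theorem stmt4 (α : ℝ) (hα : 3 ≤ α) :
    IsFrac (mu4 α) ∧ IsStable (U4 α) (V4 α) (mu4 α) ∧
    (IsStable (U4 α) (V4 α) mu41 ∧
      ∀ ν : Fin 3 → Fin 3 → ℝ, IsIntegralM ν → IsPerfect ν →
        IsStable (U4 α) (V4 α) ν → ν = mu41) ∧
    mu4 α 0 0 = 0 ∧
    (∀ (k : ℕ) (lam : Fin k → ℝ) (ν : Fin k → Fin 3 → Fin 3 → ℝ),
        (∀ j, 0 < lam j) → (∑ j, lam j = 1) →
        (∀ j, IsIntegralM (ν j) ∧ IsFrac (ν j)) →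
        (∀ m w, mu4 α m w = ∑ j, lam j * ν j m w) →
        ∀ j, ¬ IsStable (U4 α) (V4 α) (ν j)) := by
  have h00 : mu4 α 0 0 = 0 := by
    simp [mu4, mu42, mu43, mu45, Matrix.vecHead, Matrix.vecTail]
  refine ⟨mu4_frac α hα, mu4_stable α hα,
    ⟨mu41_stable α hα, fun ν hI hP hS => unique_aux α hα ν hI hP hS⟩, h00, ?_⟩
  intro k lam ν hpos hsum hIF hdec j hstab
  -- row sums of each ν j equal 1
  have hrow : ∀ j (m : Fin 3), ∑ w, ν j m w = 1 := by
    intro j0 m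
    have key : ∑ j, lam j * (1 - ∑ w, ν j m w) = 0 := by
      have e1 : ∑ j, lam j * (1 - ∑ w, ν j m w)
          = (∑ j, lam j) - ∑ j, lam j * ∑ w, ν j m w := by
        rw [← Finset.sum_sub_distrib]; congr 1; ext j; ring
      have e2 : ∑ j, lam j * ∑ w, ν j m w = ∑ w, ∑ j, lam j * ν j m w := by
        rw [Finset.sum_comm]; congr 1; ext j; rw [Finset.mul_sum]
      have e3 : ∑ w, ∑ j, lam j * ν j m w = ∑ w, mu4 α m w := by
        congr 1; ext w; rw [← hdec m w]
      rw [e1, e2, e3, hsum, mu4_rowsum α hα m, sub_self]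
    have hnn : ∀ j ∈ Finset.univ, 0 ≤ lam j * (1 - ∑ w, ν j m w) := by
      intro j _; exact mul_nonneg (le_of_lt (hpos j)) (by linarith [(hIF j).2.2.1 m])
    have := (Finset.sum_eq_zero_iff_of_nonneg hnn).mp key j0 (Finset.mem_univ j0)
    rcases mul_eq_zero.mp this with h | h
    · exact absurd h (ne_of_gt (hpos j0))
    · linarith
  have hcol : ∀ j (w : Fin 3), ∑ m, ν j m w = 1 := by
    intro j0 w
    have key : ∑ j, lam j * (1 - ∑ m, ν j m w) = 0 := by
      have e1 : ∑ j, lam j * (1 - ∑ m, ν j m w)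
          = (∑ j, lam j) - ∑ j, lam j * ∑ m, ν j m w := by
        rw [← Finset.sum_sub_distrib]; congr 1; ext j; ring
      have e2 : ∑ j, lam j * ∑ m, ν j m w = ∑ m, ∑ j, lam j * ν j m w := by
        rw [Finset.sum_comm]; congr 1; ext j; rw [Finset.mul_sum]
      have e3 : ∑ m, ∑ j, lam j * ν j m w = ∑ m, mu4 α m w := by
        congr 1; ext m; rw [← hdec m w]
      rw [e1, e2, e3, hsum, mu4_colsum α hα w, sub_self]
    have hnn : ∀ j ∈ Finset.univ, 0 ≤ lam j * (1 - ∑ m, ν j m w) := by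
      intro j _; exact mul_nonneg (le_of_lt (hpos j)) (by linarith [(hIF j).2.2.2 w])
    have := (Finset.sum_eq_zero_iff_of_nonneg hnn).mp key j0 (Finset.mem_univ j0)
    rcases mul_eq_zero.mp this with h | h
    · exact absurd h (ne_of_gt (hpos j0))
    · linarith
  -- each ν j has ν j 0 0 = 0
  have hz : ν j 0 0 = 0 := by
    have key : ∑ i, lam i * ν i 0 0 = 0 := by rw [← hdec 0 0, h00]
    have hnn : ∀ i ∈ Finset.univ, 0 ≤ lam i * ν i 0 0 := fun i _ =>
      mul_nonneg (le_of_lt (hpos i)) ((hIF i).2.1 0 0)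
    have := (Finset.sum_eq_zero_iff_of_nonneg hnn).mp key j (Finset.mem_univ j)
    rcases mul_eq_zero.mp this with h | h
    · exact absurd h (ne_of_gt (hpos j))
    · exact h
  have heq : ν j = mu41 := unique_aux α hα (ν j) (hIF j).1 ⟨hrow j, hcol j⟩ hstab
  rw [heq] at hz
  norm_num [mu41] at hz
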